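/- Define the binary Shannon entropy H₂(x) = −x·log₂x − (1−x)·log₂(1−x), with the convention 0·log₂0 = 0. Define the quantum-switch lower bound Q_QS^LB(p,q) = pq + max{0, 1 − pq + H₂(pq) − H₂(p) − H₂(q)} and the quantum-switch upper bound Q_QS^UB(p,q) = 1 − (1−p)·H₂(q). Then for all p, q ∈ [0,1]: Q_QS^LB(p,q) ≤ Q_QS^UB(p,q). -/

import Mathlib

/-!
The branch `0` of the maximum is harmless because `H₂ ≤ 1`. The other branch reduces to
`H₂(pq) ≤ H₂(p) + p·H₂(q)`. By the grouping rule the right-hand side is the entropy of the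
distribution `(pq, p(1-q), 1-p)`, and merging its last two atoms into `1-pq` can only lower the
entropy, since `-x log x` is subadditive on `[0, ∞)`.
-/

/-- The binary Shannon entropy `H₂(x) = −x·log₂x − (1−x)·log₂(1−x)`,
with the convention `0·log₂0 = 0` (automatic since `Real.logb 2 0 = 0`). -/
noncomputable def H2 (x : ℝ) : ℝ := -(x * Real.logb 2 x) - (1 - x) * Real.logb 2 (1 - x)

/-- The lower bound `Q_QS^LB(p,q)` on the quantum-switch capacity (Proposition 1). -/
noncomputable def QSLB (p q : ℝ) : ℝ :=
  p * q + max 0 (1 - p * q + H2 (p * q) - H2 p - H2 q)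

/-- The upper bound `Q_QS^UB(p,q)` on the quantum-switch capacity (Proposition 2). -/
noncomputable def QSUB (p q : ℝ) : ℝ := 1 - (1 - p) * H2 q

open Real

lemma Real.negMulLog_add_le {a b : ℝ} (ha : 0 ≤ a) (hb : 0 ≤ b) :
    negMulLog (a + b) ≤ negMulLog a + negMulLog b := by
  obtain rfl | ha := ha.eq_or_lt
  · simp
  obtain rfl | hb := hb.eq_or_lt
  · simp
  have hla : log a ≤ log (a + b) := log_le_log ha (by linarith)
  have hlb : log b ≤ log (a + b) := log_le_log hb (by linarith)
  calc negMulLog (a + b) = -(a * log (a + b)) - b * log (a + b) := by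
        rw [negMulLog]; ring
    _ ≤ -(a * log a) - b * log b := by gcongr
    _ = negMulLog a + negMulLog b := by simp only [negMulLog]; ring

lemma Real.binEntropy_mul_le {p q : ℝ} (hp₀ : 0 ≤ p) (hp₁ : p ≤ 1) (hq₁ : q ≤ 1) :
    binEntropy (p * q) ≤ binEntropy p + p * binEntropy q := by
  have hgroup : binEntropy p + p * binEntropy q =
      negMulLog (p * q) + (negMulLog (p * (1 - q)) + negMulLog (1 - p)) := by
    simp only [binEntropy_eq_negMulLog_add_negMulLog_one_sub, negMulLog_mul]
    ring
  have hmerge : negMulLog (1 - p * q) ≤ negMulLog (p * (1 - q)) + negMulLog (1 - p) := by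
    convert negMulLog_add_le (mul_nonneg hp₀ (sub_nonneg.2 hq₁)) (sub_nonneg.2 hp₁) using 2
    ring
  rw [hgroup, binEntropy_eq_negMulLog_add_negMulLog_one_sub]
  gcongr

lemma H2_eq_binEntropy_div_log_two (x : ℝ) : H2 x = binEntropy x / log 2 := by
  simp only [H2, binEntropy, logb, log_inv]
  ring

lemma H2_le_one (x : ℝ) : H2 x ≤ 1 := by
  rw [H2_eq_binEntropy_div_log_two, div_le_one (log_pos one_lt_two)]
  exact binEntropy_le_log_two

lemma H2_mul_le {p q : ℝ} (hp₀ : 0 ≤ p) (hp₁ : p ≤ 1) (hq₁ : q ≤ 1) :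
    H2 (p * q) ≤ H2 p + p * H2 q := by
  simp only [H2_eq_binEntropy_div_log_two, ← mul_div_assoc, ← add_div]
  gcongr
  exact binEntropy_mul_le hp₀ hp₁ hq₁

theorem quantum_switch_lower_le_upper (p q : ℝ) (hp : p ∈ Set.Icc (0:ℝ) 1)
    (hq : q ∈ Set.Icc (0:ℝ) 1) :
    QSLB p q ≤ QSUB p q := by
  obtain ⟨hp₀, hp₁⟩ := hp
  have hH2q := H2_le_one q
  have hmul := H2_mul_le hp₀ hp₁ hq.2
  rw [QSLB, QSUB, ← le_sub_iff_add_le']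
  refine max_le ?_ (by linarith)
  linarith [mul_nonneg (sub_nonneg.2 hp₁) (sub_nonneg.2 hH2q), mul_nonneg hp₀ (sub_nonneg.2 hq.2)]
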